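/- Exactness of the weight-graded functor Gr^W_n: let f : A → B and g : B → C be morphisms of mixed Hodge structures with range(f) = ker(g) as subspaces of B. Then for every integer n, the induced linear maps Gr^W_n(f) : Gr^W_n A → Gr^W_n B and Gr^W_n(g) : Gr^W_n B → Gr^W_n C (where Gr^W_n X := W_n X / W_{n-1} X and the induced map sends the class of x to the class of its image) satisfy range(Gr^W_n(f)) = ker(Gr^W_n(g)). -/

import Mathlib

/-!
Deligne's subspaces `I^{p,q}` split the weight filtration functorially: for a mixed Hodge
structure, `W_n ⊗ ℂ` has the complement `⨁_{p+q>n} I^{p,q}`, and morphisms of mixed Hodge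
structures preserve every `I^{p,q}`. Projecting along these complements shows that a morphism is
strict for `W` after complexification, and taking real parts gives `f(A) ∩ W_n B = f(W_n A)`.
Exactness of `Gr^W_n` is then a diagram chase using strictness of `f` in weight `n` and of `g`
in weight `n - 1`.
-/

open scoped TensorProduct

private lemma sigmaC_aux (V : Type*) [AddCommGroup V] [Module ℝ V] (c : ℂ) (x : ℂ ⊗[ℝ] V) :
    TensorProduct.map Complex.conjAe.toLinearMap LinearMap.id (c • x) =
      (starRingEnd ℂ) c • TensorProduct.map Complex.conjAe.toLinearMap LinearMap.id x := by
  induction x using TensorProduct.induction_on with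
  | zero => simp
  | tmul z v => simp [TensorProduct.smul_tmul', smul_eq_mul, map_mul]
  | add x y hx hy => simp only [smul_add, map_add, hx, hy]

/-- The conjugation involution `σ` of the complexification `ℂ ⊗[ℝ] V`,
as a `conj`-semilinear map. -/
noncomputable def sigmaC (V : Type*) [AddCommGroup V] [Module ℝ V] :
    (ℂ ⊗[ℝ] V) →ₛₗ[starRingEnd ℂ] (ℂ ⊗[ℝ] V) where
  toFun := TensorProduct.map Complex.conjAe.toLinearMap LinearMap.id
  map_add' x y := map_add _ x y
  map_smul' c x := sigmaC_aux V c x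

/-- A mixed Hodge structure on a real vector space `V`: an increasing, bounded, exhaustive
weight filtration `W` of `V` by real subspaces and a decreasing, bounded, exhaustive Hodge
filtration `F` of `V_ℂ = ℂ ⊗[ℝ] V` by complex subspaces, such that for every `n` the
filtration induced by `F` on `Gr^W_n = W_n / W_{n-1}` is a Hodge filtration of weight `n`.

Identifying the complexification of `Gr^W_n` with `(W_n)_ℂ / (W_{n-1})_ℂ` (where
`(W_n)_ℂ := (W n).baseChange ℂ ⊆ V_ℂ`), the Hodge filtration condition of weight `n` on
`Gr^W_n` — namely `F^p(Gr^W_n)_ℂ ⊕ σ(F^{n-p+1}(Gr^W_n)_ℂ) = (Gr^W_n)_ℂ` for all `p`, where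
`F^p(Gr^W_n)_ℂ` is the image of `F^p ⊓ (W_n)_ℂ` — is expressed below by pulling back along
the quotient map `(W_n)_ℂ → (W_n)_ℂ / (W_{n-1})_ℂ`: the first displayed equation is the
disjointness of the two images in the quotient, the second their spanning of the quotient. -/
def IsMixedHodgeStructure (V : Type*) [AddCommGroup V] [Module ℝ V]
    (W : ℤ → Submodule ℝ V) (F : ℤ → Submodule ℂ (ℂ ⊗[ℝ] V)) : Prop :=
  Monotone W ∧
  (∃ a : ℤ, ∀ n ≤ a, W n = ⊥) ∧
  (∃ b : ℤ, ∀ n ≥ b, W n = ⊤) ∧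
  (∀ p : ℤ, F (p + 1) ≤ F p) ∧
  (∃ a : ℤ, ∀ p ≤ a, F p = ⊤) ∧
  (∃ b : ℤ, ∀ p ≥ b, F p = ⊥) ∧
  (∀ n p : ℤ,
    ((F p ⊓ (W n).baseChange ℂ) ⊔ (W (n - 1)).baseChange ℂ) ⊓
        (((F (n - p + 1) ⊓ (W n).baseChange ℂ).map (sigmaC V)) ⊔ (W (n - 1)).baseChange ℂ)
      = (W (n - 1)).baseChange ℂ ∧
    (F p ⊓ (W n).baseChange ℂ) ⊔ ((F (n - p + 1) ⊓ (W n).baseChange ℂ).map (sigmaC V))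
        ⊔ (W (n - 1)).baseChange ℂ
      = (W n).baseChange ℂ)

/-- The linear map `Gr^W_n(f) : W_n A / W_{n-1} A → W_n B / W_{n-1} B` induced by a filtered
linear map `f : A → B`, sending the class of `x` to the class of `f x`. -/
noncomputable def grW {A B : Type*} [AddCommGroup A] [Module ℝ A] [AddCommGroup B] [Module ℝ B]
    (WA : ℤ → Submodule ℝ A) (WB : ℤ → Submodule ℝ B) (f : A →ₗ[ℝ] B)
    (hf : ∀ n : ℤ, ∀ x ∈ WA n, f x ∈ WB n) (n : ℤ) :
    (↥(WA n) ⧸ (WA (n - 1)).comap (WA n).subtype) →ₗ[ℝ]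
      (↥(WB n) ⧸ (WB (n - 1)).comap (WB n).subtype) :=
  Submodule.mapQ _ _ (f.restrict (fun x hx => hf n x hx))
    (fun x hx => hf (n - 1) x.1 hx)

theorem Int.forall_of_forall_le_of_sub_one {P : ℤ → Prop} {a : ℤ} (base : ∀ n ≤ a, P n)
    (step : ∀ n, P (n - 1) → P n) (n : ℤ) : P n := by
  induction n using Int.inductionOn' (b := a) with
  | zero => exact base a le_rfl
  | succ k _ ih => exact step (k + 1) (by simpa using ih)
  | pred k _ _ => exact base (k - 1) (by omega)

theorem Int.forall_of_forall_ge_of_add_one {P : ℤ → Prop} {b : ℤ} (base : ∀ n ≥ b, P n)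
    (step : ∀ n, P (n + 1) → P n) (n : ℤ) : P n := by
  simpa using Int.forall_of_forall_le_of_sub_one (P := fun n => P (-n)) (a := -b)
    (fun n hn => base (-n) (by omega)) (fun n h => step (-n) (by convert h using 2; ring)) (-n)

theorem Int.biSup_gt_eq_biSup_ge_add_one {α : Type*} [CompleteLattice α] (f : ℤ → α)
    (n : ℤ) : ⨆ m > n, f m = ⨆ m ≥ n + 1, f m := by
  simp only [gt_iff_lt, Int.lt_iff_add_one_le, ge_iff_le]

section GradedSplitting

variable {α : Type*} [CompleteLattice α] [IsModularLattice α]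

theorem isCompl_iSup_gt_of_graded {W U : ℤ → α} (hW : Monotone W) {b : ℤ}
    (htop : ∀ n ≥ b, W n = ⊤) (hUW : ∀ n, U n ≤ W n)
    (hdisj : ∀ n, Disjoint (U (n + 1)) (W n))
    (hspan : ∀ n, W (n + 1) ≤ U (n + 1) ⊔ W n) (n : ℤ) :
    IsCompl (W n) (⨆ m > n, U m) := by
  induction n using Int.forall_of_forall_ge_of_add_one (b := b) with
  | base n hn =>
    have hU : ∀ m > n, U m = ⊥ := fun m hm => by
      simpa [htop (m - 1) (by omega)] using hdisj (m - 1)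
    simp [htop n hn, iSup₂_eq_bot.mpr hU, isCompl_top_bot]
  | step n ih =>
    have hW' : W n ⊔ U (n + 1) = W (n + 1) :=
      le_antisymm (sup_le (hW (by omega)) (hUW _)) (by rw [sup_comm]; exact hspan n)
    rw [Int.biSup_gt_eq_biSup_ge_add_one, biSup_ge_eq_sup]
    exact Disjoint.isCompl_sup_right_of_isCompl_sup_left (hdisj n).symm (hW' ▸ ih)

end GradedSplitting

theorem LinearMap.range_inf_le_map_of_codisjoint {R M N : Type*} [Ring R] [AddCommGroup M]
    [Module R M] [AddCommGroup N] [Module R N] {f : M →ₗ[R] N} {P Q : Submodule R M}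
    {P' Q' : Submodule R N} (hPQ : Codisjoint P Q) (hPQ' : Disjoint P' Q')
    (hP : P.map f ≤ P') (hQ : Q.map f ≤ Q') : range f ⊓ P' ≤ P.map f := by
  rintro _ ⟨⟨y, rfl⟩, hy⟩
  obtain ⟨y₁, hy₁, y₂, hy₂, rfl⟩ :=
    Submodule.mem_sup.mp (hPQ.eq_top ▸ Submodule.mem_top (x := y))
  have hfy₂ : f y₂ = 0 := by
    refine Submodule.disjoint_def.mp hPQ' _ ?_ (hQ ⟨y₂, hy₂, rfl⟩)
    simpa using sub_mem hy (hP ⟨y₁, hy₁, rfl⟩)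
  exact ⟨y₁, hy₁, by simp [hfy₂]⟩

section BaseChange

variable {R A M N : Type*} [CommRing R] [CommRing A] [Algebra R A]
  [AddCommGroup M] [Module R M] [AddCommGroup N] [Module R N]

theorem Submodule.map_baseChange_le {f : M →ₗ[R] N} {p : Submodule R M} {q : Submodule R N}
    (h : ∀ x ∈ p, f x ∈ q) : (p.baseChange A).map (f.baseChange A) ≤ q.baseChange A := by
  rw [Submodule.baseChange, ← LinearMap.range_comp, ← LinearMap.baseChange_comp,
    show f ∘ₗ p.subtype = q.subtype ∘ₗ f.restrict h from rfl, LinearMap.baseChange_comp]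
  exact LinearMap.range_comp_le_range _ _

end BaseChange

section RealPart

variable {M N : Type*} [AddCommGroup M] [Module ℝ M] [AddCommGroup N] [Module ℝ N]

variable (M) in
noncomputable def reTensor : ℂ ⊗[ℝ] M →ₗ[ℝ] M :=
  TensorProduct.lid ℝ M ∘ₗ Complex.reLm.rTensor M

@[simp]
theorem reTensor_tmul (z : ℂ) (x : M) : reTensor M (z ⊗ₜ x) = z.re • x := by
  simp [reTensor]

theorem reTensor_baseChange (f : M →ₗ[ℝ] N) (x : ℂ ⊗[ℝ] M) :
    reTensor N (f.baseChange ℂ x) = f (reTensor M x) := by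
  induction x using TensorProduct.induction_on with
  | zero => simp
  | tmul z v => simp
  | add x y hx hy => simp only [map_add, hx, hy]

theorem reTensor_mem {p : Submodule ℝ M} {x : ℂ ⊗[ℝ] M} (hx : x ∈ p.baseChange ℂ) :
    reTensor M x ∈ p := by
  obtain ⟨z, rfl⟩ := hx
  rw [reTensor_baseChange]
  exact (reTensor p z).2

theorem LinearMap.range_inf_le_map_of_baseChange {f : M →ₗ[ℝ] N} {p : Submodule ℝ M}
    {q : Submodule ℝ N}
    (h : range (f.baseChange ℂ) ⊓ q.baseChange ℂ ≤
      (p.baseChange ℂ).map (f.baseChange ℂ)) :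
    range f ⊓ q ≤ p.map f := by
  rintro _ ⟨⟨a, rfl⟩, ha⟩
  obtain ⟨y, hy, hfy⟩ := h ⟨⟨1 ⊗ₜ a, LinearMap.baseChange_tmul _ _ _⟩,
    Submodule.tmul_mem_baseChange_of_mem 1 ha⟩
  refine ⟨reTensor M y, reTensor_mem hy, ?_⟩
  rw [← reTensor_baseChange, hfy, reTensor_tmul, Complex.one_re, one_smul]

end RealPart

section Conjugation

variable {V V' : Type*} [AddCommGroup V] [Module ℝ V] [AddCommGroup V'] [Module ℝ V']

@[simp]
theorem sigmaC_tmul (z : ℂ) (v : V) : sigmaC V (z ⊗ₜ v) = (starRingEnd ℂ) z ⊗ₜ v := rfl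

@[simp]
theorem sigmaC_sigmaC (x : ℂ ⊗[ℝ] V) : sigmaC V (sigmaC V x) = x := by
  induction x using TensorProduct.induction_on with
  | zero => simp
  | tmul z v => simp
  | add x y hx hy => rw [map_add, map_add, hx, hy]

theorem baseChange_sigmaC (f : V →ₗ[ℝ] V') (x : ℂ ⊗[ℝ] V) :
    f.baseChange ℂ (sigmaC V x) = sigmaC V' (f.baseChange ℂ x) := by
  induction x using TensorProduct.induction_on with
  | zero => simp
  | tmul z v => simp
  | add x y hx hy => rw [map_add, map_add, map_add, map_add, hx, hy]

theorem sigmaC_mem_baseChange {p : Submodule ℝ V} {x : ℂ ⊗[ℝ] V}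
    (hx : x ∈ p.baseChange ℂ) : sigmaC V x ∈ p.baseChange ℂ := by
  obtain ⟨z, rfl⟩ := hx
  exact ⟨sigmaC p z, baseChange_sigmaC _ z⟩

theorem map_sigmaC_le_baseChange {X : Submodule ℂ (ℂ ⊗[ℝ] V)} {p : Submodule ℝ V}
    (hX : X ≤ p.baseChange ℂ) : X.map (sigmaC V) ≤ p.baseChange ℂ := by
  rintro _ ⟨x, hx, rfl⟩
  exact sigmaC_mem_baseChange (hX hx)

theorem map_sigmaC_inf_baseChange_le (X : Submodule ℂ (ℂ ⊗[ℝ] V)) (p : Submodule ℝ V) :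
    X.map (sigmaC V) ⊓ p.baseChange ℂ ≤ (X ⊓ p.baseChange ℂ).map (sigmaC V) := by
  rintro _ ⟨⟨x, hx, rfl⟩, hσx⟩
  exact ⟨x, ⟨hx, by simpa using sigmaC_mem_baseChange hσx⟩, rfl⟩

theorem map_map_sigmaC_le {f : V →ₗ[ℝ] V'} {X : Submodule ℂ (ℂ ⊗[ℝ] V)}
    {Y : Submodule ℂ (ℂ ⊗[ℝ] V')} (h : X.map (f.baseChange ℂ) ≤ Y) :
    (X.map (sigmaC V)).map (f.baseChange ℂ) ≤ Y.map (sigmaC V') := by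
  rintro _ ⟨_, ⟨x, hx, rfl⟩, rfl⟩
  exact ⟨f.baseChange ℂ x, h ⟨x, hx, rfl⟩, (baseChange_sigmaC f x).symm⟩

end Conjugation

section Deligne

variable {V : Type*} [AddCommGroup V] [Module ℝ V]
  (W : ℤ → Submodule ℝ V) (F : ℤ → Submodule ℂ (ℂ ⊗[ℝ] V))

/- `conjPiece W F q m` is `F̄^q ∩ W_m`, and `deligneI W F n p` is Deligne's `I^{p,q}` for
`q = n - p`: `F^p ∩ W_n ∩ (F̄^q ∩ W_n + ∑_{j ≥ 1} F̄^{q-j} ∩ W_{n-j-1})`, the sum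
reindexed by `m = n - j - 1` (the extra term `m = n - 1` lies in `F̄^q ∩ W_n`). -/
noncomputable def conjPiece (q m : ℤ) : Submodule ℂ (ℂ ⊗[ℝ] V) :=
  (F q ⊓ (W m).baseChange ℂ).map (sigmaC V)

noncomputable def deligneTail (n p : ℤ) : Submodule ℂ (ℂ ⊗[ℝ] V) :=
  ⨆ m < n, conjPiece W F (m - p + 1) m

noncomputable def deligneI (n p : ℤ) : Submodule ℂ (ℂ ⊗[ℝ] V) :=
  F p ⊓ (W n).baseChange ℂ ⊓ (conjPiece W F (n - p) n ⊔ deligneTail W F n p)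

noncomputable def deligneU (n : ℤ) : Submodule ℂ (ℂ ⊗[ℝ] V) :=
  ⨆ p, deligneI W F n p

end Deligne

namespace IsMixedHodgeStructure

variable {V : Type*} [AddCommGroup V] [Module ℝ V]
  {W : ℤ → Submodule ℝ V} {F : ℤ → Submodule ℂ (ℂ ⊗[ℝ] V)}

theorem monotone (h : IsMixedHodgeStructure V W F) : Monotone W := h.1

theorem antitone (h : IsMixedHodgeStructure V W F) : Antitone F := antitone_int_of_succ_le h.2.2.2.1

theorem baseChange_mono (h : IsMixedHodgeStructure V W F) {m n : ℤ} (hmn : m ≤ n) :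
    (W m).baseChange ℂ ≤ (W n).baseChange ℂ :=
  Submodule.baseChange_mono ℂ (h.monotone hmn)

theorem exists_weight_eq_top (h : IsMixedHodgeStructure V W F) : ∃ b, ∀ n ≥ b, W n = ⊤ :=
  h.2.2.1

theorem exists_hodge_eq_top (h : IsMixedHodgeStructure V W F) : ∃ a, ∀ p ≤ a, F p = ⊤ :=
  h.2.2.2.2.1

theorem hodge_inf_eq (h : IsMixedHodgeStructure V W F) (n p : ℤ) :
    (F p ⊓ (W n).baseChange ℂ ⊔ (W (n - 1)).baseChange ℂ) ⊓
        (conjPiece W F (n - p + 1) n ⊔ (W (n - 1)).baseChange ℂ) = (W (n - 1)).baseChange ℂ :=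
  (h.2.2.2.2.2.2 n p).1

theorem hodge_sup_eq (h : IsMixedHodgeStructure V W F) (n p : ℤ) :
    F p ⊓ (W n).baseChange ℂ ⊔ conjPiece W F (n - p + 1) n ⊔ (W (n - 1)).baseChange ℂ =
      (W n).baseChange ℂ :=
  (h.2.2.2.2.2.2 n p).2

theorem weight_induction (h : IsMixedHodgeStructure V W F) {P : ℤ → Prop}
    (bot : ∀ n, W n = ⊥ → P n)    (step : ∀ n, P (n - 1) → P n) (n : ℤ) : P n := by
  obtain ⟨a, ha⟩ := h.2.1
  exact Int.forall_of_forall_le_of_sub_one (fun n hn => bot n (ha n hn)) step n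

theorem hodge_induction (h : IsMixedHodgeStructure V W F) {P : ℤ → Prop}
    (bot : ∀ p, F p = ⊥ → P p)    (step : ∀ p, P (p + 1) → P p) (p : ℤ) : P p := by
  obtain ⟨b, hb⟩ := h.2.2.2.2.2.1
  exact Int.forall_of_forall_ge_of_add_one (fun p hp => bot p (hb p hp)) step p

theorem weight_le_hodge_sup_deligneTail (h : IsMixedHodgeStructure V W F) {m n : ℤ}
    (hmn : m < n) (p : ℤ) :
    (W m).baseChange ℂ ≤ F p ⊓ (W (n - 1)).baseChange ℂ ⊔ deligneTail W F n p := by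
  induction m using h.weight_induction with
  | bot m hm => simp [hm]
  | step m ih =>
    rw [← h.hodge_sup_eq m p]
    refine sup_le (sup_le ?_ ?_) (ih (by omega))
    · exact le_sup_of_le_left (inf_le_inf_left _ (h.baseChange_mono (by omega)))
    · exact le_sup_of_le_right (le_biSup (fun m => conjPiece W F (m - p + 1) m) hmn)

theorem hodge_sup_inf_conjPiece_sup_le (h : IsMixedHodgeStructure V W F) (n p : ℤ) :
    (F p ⊓ (W n).baseChange ℂ ⊔ (W (n - 1)).baseChange ℂ) ⊓
        (conjPiece W F (n - p) n ⊔ (W (n - 1)).baseChange ℂ) ≤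
      deligneI W F n p ⊔ (W (n - 1)).baseChange ℂ := by
  set X := F p ⊓ (W n).baseChange ℂ
  set C := (W (n - 1)).baseChange ℂ
  set B := conjPiece W F (n - p) n
  set D := F p ⊓ (W (n - 1)).baseChange ℂ
  have hDX : D ≤ X := inf_le_inf_left _ (h.baseChange_mono (by omega))
  have hBC : B ⊔ C ≤ D ⊔ (B ⊔ deligneTail W F n p) :=
    sup_le (le_sup_of_le_right le_sup_left)
      ((h.weight_le_hodge_sup_deligneTail (by omega) p).trans (sup_le_sup_left le_sup_right _))
  calc (X ⊔ C) ⊓ (B ⊔ C) = C ⊔ (B ⊔ C) ⊓ X := by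
        rw [sup_comm X C, sup_inf_assoc_of_le _ le_sup_right, inf_comm]
    _ ≤ C ⊔ (D ⊔ (B ⊔ deligneTail W F n p)) ⊓ X :=
        sup_le_sup_left (inf_le_inf_right _ hBC) _
    _ = C ⊔ (D ⊔ deligneI W F n p) := by rw [sup_inf_assoc_of_le _ hDX, inf_comm]; rfl
    _ ≤ deligneI W F n p ⊔ C :=
        sup_le le_sup_right (sup_le (le_sup_of_le_right inf_le_right) le_sup_left)

theorem hodge_inf_weight_le_deligneU_sup (h : IsMixedHodgeStructure V W F) (n p : ℤ) :
    F p ⊓ (W n).baseChange ℂ ≤ deligneU W F n ⊔ (W (n - 1)).baseChange ℂ := by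
  induction p using h.hodge_induction with
  | bot p hp => simp [hp]
  | step p ih =>
    set C := (W (n - 1)).baseChange ℂ
    set A := F (p + 1) ⊓ (W n).baseChange ℂ
    set B := conjPiece W F (n - p) n
    set Y := F p ⊓ (W n).baseChange ℂ ⊔ C
    have hAC : A ⊔ C ≤ Y := sup_le_sup_right (inf_le_inf_right _ (h.antitone (by omega))) _
    have hspan : A ⊔ C ⊔ B = (W n).baseChange ℂ := by
      rw [sup_right_comm, ← h.hodge_sup_eq n (p + 1), show n - (p + 1) + 1 = n - p by ring]
    have hBY : B ⊓ Y ≤ deligneU W F n ⊔ C :=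
      calc B ⊓ Y ≤ Y ⊓ (B ⊔ C) := le_inf inf_le_right (inf_le_left.trans le_sup_left)
        _ ≤ deligneI W F n p ⊔ C := h.hodge_sup_inf_conjPiece_sup_le n p
        _ ≤ deligneU W F n ⊔ C := sup_le_sup_right (le_iSup (deligneI W F n) p) _
    calc F p ⊓ (W n).baseChange ℂ ≤ (A ⊔ C ⊔ B) ⊓ Y := by
          rw [hspan]; exact le_inf inf_le_right le_sup_left
      _ = A ⊔ C ⊔ B ⊓ Y := sup_inf_assoc_of_le _ hAC
      _ ≤ deligneU W F n ⊔ C := sup_le (sup_le ih le_sup_right) hBY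

theorem weight_le_deligneU_sup (h : IsMixedHodgeStructure V W F) (n : ℤ) :
    (W n).baseChange ℂ ≤ deligneU W F n ⊔ (W (n - 1)).baseChange ℂ := by
  obtain ⟨a, ha⟩ := h.exists_hodge_eq_top
  simpa [ha a le_rfl] using h.hodge_inf_weight_le_deligneU_sup n a

theorem deligneI_inf_weight_le (h : IsMixedHodgeStructure V W F) {m n : ℤ} (hmn : m < n)
    (p : ℤ) : deligneI W F n p ⊓ (W m).baseChange ℂ ≤ (W (m - 1)).baseChange ℂ := by
  set C := (W (m - 1)).baseChange ℂ
  set G := F (m - p + 1)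
  have hbar : conjPiece W F (n - p) n ⊔ deligneTail W F n p ≤ G.map (sigmaC V) ⊔ C := by
    refine sup_le (le_sup_of_le_left (Submodule.map_mono (inf_le_left.trans
      (h.antitone (by omega))))) (iSup₂_le fun k hk => ?_)
    rcases le_or_gt m k with hmk | hkm
    · exact le_sup_of_le_left (Submodule.map_mono (inf_le_left.trans (h.antitone (by omega))))
    · exact le_sup_of_le_right
        ((map_sigmaC_le_baseChange inf_le_right).trans (h.baseChange_mono (by omega)))
  have hconj :
      (G.map (sigmaC V) ⊔ C) ⊓ (W m).baseChange ℂ ≤ conjPiece W F (m - p + 1) m ⊔ C := by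
    rw [sup_comm, sup_inf_assoc_of_le _ (h.baseChange_mono (by omega)), sup_comm]
    exact sup_le_sup_right (map_sigmaC_inf_baseChange_le _ _) _
  refine (le_inf ?_ ?_).trans (h.hodge_inf_eq m p).le
  · exact le_sup_of_le_left (inf_le_inf_right _ (inf_le_left.trans inf_le_left))
  · exact (inf_le_inf_right _ (inf_le_right.trans hbar)).trans hconj

theorem disjoint_deligneI_weight (h : IsMixedHodgeStructure V W F) (n p : ℤ) :
    Disjoint (deligneI W F n p) ((W (n - 1)).baseChange ℂ) := by
  have key : ∀ m, m < n → deligneI W F n p ⊓ (W m).baseChange ℂ = ⊥ := by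
    intro m
    induction m using h.weight_induction with
    | bot m hm => simp [hm]
    | step m ih =>
      intro hmn
      exact eq_bot_mono (le_inf inf_le_left (h.deligneI_inf_weight_le hmn p)) (ih (by omega))
  exact disjoint_iff.mpr (key (n - 1) (by omega))

theorem deligneI_le_conjPiece_sup (h : IsMixedHodgeStructure V W F) (n p : ℤ) :
    deligneI W F n p ≤ conjPiece W F (n - p) n ⊔ (W (n - 1)).baseChange ℂ :=
  inf_le_right.trans (sup_le_sup_left (iSup₂_le fun m hm =>
    (map_sigmaC_le_baseChange inf_le_right).trans (h.baseChange_mono (by omega))) _)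

theorem disjoint_deligneU_weight (h : IsMixedHodgeStructure V W F) (n : ℤ) :
    Disjoint (deligneU W F n) ((W (n - 1)).baseChange ℂ) := by
  set C := (W (n - 1)).baseChange ℂ
  have hJ : ∀ q, Disjoint (⨆ p ≥ q, deligneI W F n p) C := by
    intro q
    induction q using h.hodge_induction with
    | bot q hq =>
      refine disjoint_bot_left.mono_left (iSup₂_le fun p hp => ?_)
      exact hq ▸ (inf_le_left.trans inf_le_left).trans (h.antitone hp)
    | step q ih =>
      rw [biSup_ge_eq_sup, Int.biSup_gt_eq_biSup_ge_add_one]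
      refine ih.disjoint_sup_left_of_disjoint_sup_right (disjoint_iff_inf_le.mpr ?_)
      have hJF : (⨆ p ≥ q + 1, deligneI W F n p) ≤ F (q + 1) ⊓ (W n).baseChange ℂ :=
        iSup₂_le fun p hp => le_inf ((inf_le_left.trans inf_le_left).trans (h.antitone hp))
          (inf_le_left.trans inf_le_right)
      have hI := h.deligneI_le_conjPiece_sup n q
      rw [show n - q = n - (q + 1) + 1 by ring] at hI
      calc _ ≤ deligneI W F n q ⊓ C := le_inf inf_le_left
            ((le_inf (inf_le_right.trans (sup_le_sup_right hJF _)) (inf_le_left.trans hI)).trans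
              (h.hodge_inf_eq n (q + 1)).le)
        _ = ⊥ := (h.disjoint_deligneI_weight n q).eq_bot
  have hU : deligneU W F n ≤ ⨆ q, ⨆ p ≥ q, deligneI W F n p :=
    iSup_le fun p => le_iSup_of_le p (le_iSup₂_of_le p le_rfl le_rfl)
  refine Disjoint.mono_left hU ((Directed.disjoint_iSup_left ?_).mpr hJ)
  exact Antitone.directed_le fun q q' hqq' => biSup_mono fun p hp => le_trans hqq' hp

theorem isCompl_weight_iSup_deligneU (h : IsMixedHodgeStructure V W F) (n : ℤ) :
    IsCompl ((W n).baseChange ℂ) (⨆ m > n, deligneU W F m) := by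
  obtain ⟨b, hb⟩ := h.exists_weight_eq_top
  refine isCompl_iSup_gt_of_graded (W := fun n => (W n).baseChange ℂ) (U := deligneU W F)
    (fun _ _ hmn => h.baseChange_mono hmn) (b := b) (fun n hn => by simp [hb n hn])
    (fun n => iSup_le fun p => inf_le_left.trans inf_le_right) (fun n => ?_) (fun n => ?_) n
  · simpa using h.disjoint_deligneU_weight (n + 1)
  · simpa using h.weight_le_deligneU_sup (n + 1)

end IsMixedHodgeStructure

section Functoriality

variable {A B : Type*} [AddCommGroup A] [Module ℝ A] [AddCommGroup B] [Module ℝ B]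
  {WA : ℤ → Submodule ℝ A} {FA : ℤ → Submodule ℂ (ℂ ⊗[ℝ] A)}
  {WB : ℤ → Submodule ℝ B} {FB : ℤ → Submodule ℂ (ℂ ⊗[ℝ] B)} {f : A →ₗ[ℝ] B}

theorem map_conjPiece_le (hfW : ∀ n : ℤ, ∀ x ∈ WA n, f x ∈ WB n)
    (hfF : ∀ p : ℤ, (FA p).map (f.baseChange ℂ) ≤ FB p) (q m : ℤ) :
    (conjPiece WA FA q m).map (f.baseChange ℂ) ≤ conjPiece WB FB q m :=
  map_map_sigmaC_le ((Submodule.map_inf_le _).trans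
    (inf_le_inf (hfF q) (Submodule.map_baseChange_le (hfW m))))

theorem map_deligneI_le (hfW : ∀ n : ℤ, ∀ x ∈ WA n, f x ∈ WB n)
    (hfF : ∀ p : ℤ, (FA p).map (f.baseChange ℂ) ≤ FB p) (n p : ℤ) :
    (deligneI WA FA n p).map (f.baseChange ℂ) ≤ deligneI WB FB n p := by
  refine (Submodule.map_inf_le _).trans (inf_le_inf ((Submodule.map_inf_le _).trans
    (inf_le_inf (hfF p) (Submodule.map_baseChange_le (hfW n)))) ?_)
  simp only [deligneTail, Submodule.map_sup, Submodule.map_iSup]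
  exact sup_le_sup (map_conjPiece_le hfW hfF _ _)
    (iSup₂_mono fun m _ => map_conjPiece_le hfW hfF _ _)

theorem map_iSup_deligneU_le (hfW : ∀ n : ℤ, ∀ x ∈ WA n, f x ∈ WB n)
    (hfF : ∀ p : ℤ, (FA p).map (f.baseChange ℂ) ≤ FB p) (n : ℤ) :
    (⨆ m > n, deligneU WA FA m).map (f.baseChange ℂ) ≤ ⨆ m > n, deligneU WB FB m := by
  simp only [deligneU, Submodule.map_iSup]
  exact iSup₂_mono fun m _ => iSup_mono fun p => map_deligneI_le hfW hfF m p

theorem IsMixedHodgeStructure.range_inf_weight_le_map (hA : IsMixedHodgeStructure A WA FA)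
    (hB : IsMixedHodgeStructure B WB FB) (hfW : ∀ n : ℤ, ∀ x ∈ WA n, f x ∈ WB n)
    (hfF : ∀ p : ℤ, (FA p).map (f.baseChange ℂ) ≤ FB p) (n : ℤ) :
    LinearMap.range f ⊓ WB n ≤ (WA n).map f :=
  LinearMap.range_inf_le_map_of_baseChange <| LinearMap.range_inf_le_map_of_codisjoint
    (hA.isCompl_weight_iSup_deligneU n).codisjoint (hB.isCompl_weight_iSup_deligneU n).disjoint
    (Submodule.map_baseChange_le (hfW n)) (map_iSup_deligneU_le hfW hfF n)

end Functoriality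

section Graded

variable {A B C : Type*} [AddCommGroup A] [Module ℝ A] [AddCommGroup B] [Module ℝ B]
  [AddCommGroup C] [Module ℝ C] {WA : ℤ → Submodule ℝ A} {WB : ℤ → Submodule ℝ B}
  {WC : ℤ → Submodule ℝ C}

@[simp]
theorem grW_mk {f : A →ₗ[ℝ] B} (hfW : ∀ n : ℤ, ∀ x ∈ WA n, f x ∈ WB n) (n : ℤ)
    (x : WA n) :
    grW WA WB f hfW n (Submodule.Quotient.mk x) = Submodule.Quotient.mk ⟨f x, hfW n x x.2⟩ :=
  rfl

theorem range_grW_eq_ker_grW {f : A →ₗ[ℝ] B} {g : B →ₗ[ℝ] C}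
    (hfW : ∀ n : ℤ, ∀ x ∈ WA n, f x ∈ WB n)
    (hgW : ∀ n : ℤ, ∀ x ∈ WB n, g x ∈ WC n) {n : ℤ}
    (hWB : WB (n - 1) ≤ WB n) (hexact : LinearMap.range f = LinearMap.ker g)
    (hf : LinearMap.range f ⊓ WB n ≤ (WA n).map f)
    (hg : LinearMap.range g ⊓ WC (n - 1) ≤ (WB (n - 1)).map g) :
    LinearMap.range (grW WA WB f hfW n) = LinearMap.ker (grW WB WC g hgW n) := by
  apply le_antisymm
  · rintro _ ⟨ξ, rfl⟩
    obtain ⟨x, rfl⟩ := Submodule.Quotient.mk_surjective _ ξ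
    have hgfx : g (f x) = 0 := LinearMap.mem_ker.mp (hexact ▸ LinearMap.mem_range_self f x)
    rw [LinearMap.mem_ker, grW_mk, grW_mk, Submodule.Quotient.mk_eq_zero]
    simp [hgfx]
  · intro ξ hξ
    obtain ⟨x, rfl⟩ := Submodule.Quotient.mk_surjective _ ξ
    rw [LinearMap.mem_ker, grW_mk, Submodule.Quotient.mk_eq_zero] at hξ
    obtain ⟨y, hy, hgy⟩ := hg ⟨⟨x, rfl⟩, hξ⟩
    have hxy : (x : B) - y ∈ LinearMap.range f := hexact ▸ by simp [hgy]
    obtain ⟨a, ha, hfa⟩ := hf ⟨hxy, sub_mem x.2 (hWB hy)⟩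
    refine ⟨Submodule.Quotient.mk ⟨a, ha⟩, ?_⟩
    rw [grW_mk, Submodule.Quotient.eq]
    simpa [hfa] using neg_mem hy

end Graded

theorem grW_exact_general (A B C : Type*)
    [AddCommGroup A] [Module ℝ A]
    [AddCommGroup B] [Module ℝ B]
    [AddCommGroup C] [Module ℝ C]
    (WA : ℤ → Submodule ℝ A) (FA : ℤ → Submodule ℂ (ℂ ⊗[ℝ] A))
    (WB : ℤ → Submodule ℝ B) (FB : ℤ → Submodule ℂ (ℂ ⊗[ℝ] B))
    (WC : ℤ → Submodule ℝ C) (FC : ℤ → Submodule ℂ (ℂ ⊗[ℝ] C))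
    (hA : IsMixedHodgeStructure A WA FA) (hB : IsMixedHodgeStructure B WB FB)
    (hC : IsMixedHodgeStructure C WC FC)
    (f : A →ₗ[ℝ] B) (g : B →ₗ[ℝ] C)
    (hfW : ∀ n : ℤ, ∀ x ∈ WA n, f x ∈ WB n)
    (hfF : ∀ p : ℤ, (FA p).map (f.baseChange ℂ) ≤ FB p)
    (hgW : ∀ n : ℤ, ∀ x ∈ WB n, g x ∈ WC n)
    (hgF : ∀ p : ℤ, (FB p).map (g.baseChange ℂ) ≤ FC p)
    (hexact : LinearMap.range f = LinearMap.ker g) :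
    ∀ n : ℤ, LinearMap.range (grW WA WB f hfW n) = LinearMap.ker (grW WB WC g hgW n) := fun n =>
  range_grW_eq_ker_grW hfW hgW (hB.monotone (by omega)) hexact
    (hA.range_inf_weight_le_map hB hfW hfF n) (hB.range_inf_weight_le_map hC hgW hgF (n - 1))

/-- exactness of `Gr^W_n`. If `f : A → B` and `g : B → C` are morphisms
of mixed Hodge structures with `range f = ker g`, then for every `n` the induced maps on
`Gr^W_n := W_n / W_{n-1}` satisfy `range (Gr^W_n f) = ker (Gr^W_n g)`. -/
theorem grW_exact (A B C : Type*)
    [AddCommGroup A] [Module ℝ A] [FiniteDimensional ℝ A]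
    [AddCommGroup B] [Module ℝ B] [FiniteDimensional ℝ B]
    [AddCommGroup C] [Module ℝ C] [FiniteDimensional ℝ C]
    (WA : ℤ → Submodule ℝ A) (FA : ℤ → Submodule ℂ (ℂ ⊗[ℝ] A))
    (WB : ℤ → Submodule ℝ B) (FB : ℤ → Submodule ℂ (ℂ ⊗[ℝ] B))
    (WC : ℤ → Submodule ℝ C) (FC : ℤ → Submodule ℂ (ℂ ⊗[ℝ] C))
    (hA : IsMixedHodgeStructure A WA FA) (hB : IsMixedHodgeStructure B WB FB)
    (hC : IsMixedHodgeStructure C WC FC)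
    (f : A →ₗ[ℝ] B) (g : B →ₗ[ℝ] C)
    (hfW : ∀ n : ℤ, ∀ x ∈ WA n, f x ∈ WB n)
    (hfF : ∀ p : ℤ, (FA p).map (f.baseChange ℂ) ≤ FB p)
    (hgW : ∀ n : ℤ, ∀ x ∈ WB n, g x ∈ WC n)
    (hgF : ∀ p : ℤ, (FB p).map (g.baseChange ℂ) ≤ FC p)
    (hexact : LinearMap.range f = LinearMap.ker g) :
    ∀ n : ℤ, LinearMap.range (grW WA WB f hfW n) = LinearMap.ker (grW WB WC g hgW n) :=
  grW_exact_general A B C WA FA WB FB WC FC hA hB hC f g hfW hfF hgW hgF hexact
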